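/- arXiv:1304.6027 — 2 statements merged into one kernel-verified Lean document; each statement's English description precedes it below -/
import Mathlib

section
/- Lower bound on hitting the hypergeometric mean: let n, d, l be positive integers with l < d < n, d dividing n·l, and l ≤ n·l/d ≤ n. Then the hypergeometric probability of drawing exactly l defectives in a sample of size n·l/d satisfies C(d,l)·C(n−d, nl/d − l) / C(n, nl/d) ≥ (4π²/e⁵)·(1/√l)·√(d/(d−l))·√(n/(n−d)). -/
/-!
Write the sample of size `s = n l / d` as a 2×2 table: `l` defectives and `v = s - l` good items
are drawn, `u = d - l` defectives and `w` good items are left, so `n = l + u + v + w` and the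
mean condition `d s = n l` becomes `l w = u v`. The probability is
`d! (n-d)! s! (n-s)! / (l! u! v! w! n!)`. Stirling's bounds `√π ≤ k! / (√(2k) (k/e)^k) ≤ e/√2`
(the lower one is the limit of the decreasing Stirling sequence, the upper one its first term)
turn this into `π² / (e/√2)⁵` times the same ratio with `k!` replaced by `√(2k) (k/e)^k`. Because
every cell times `n` is the product of its row and column sums, the powers `k^k` cancel exactly,
and the square roots leave `√(n d / (l u (n-d))) / √2`.
-/

open Real Stirling
open scoped Nat

/-- `stirlingSeq k = k ! / stirlingDenom k`. -/
noncomputable def stirlingDenom (k : ℕ) : ℝ := √(2 * k) * (k / exp 1) ^ k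

lemma stirlingDenom_pos {k : ℕ} (hk : k ≠ 0) : 0 < stirlingDenom k := by
  unfold stirlingDenom; positivity

lemma stirlingDenom_nonneg (k : ℕ) : 0 ≤ stirlingDenom k := by
  unfold stirlingDenom; positivity

lemma stirlingSeq_le_exp_one_div_sqrt_two {k : ℕ} (hk : k ≠ 0) : stirlingSeq k ≤ exp 1 / √2 := by
  obtain ⟨j, rfl⟩ := Nat.exists_eq_succ_of_ne_zero hk
  simpa using stirlingSeq'_antitone (Nat.zero_le j)

lemma sqrt_pi_mul_stirlingDenom_le_factorial (k : ℕ) : √π * stirlingDenom k ≤ k ! := by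
  obtain rfl | hk := eq_or_ne k 0
  · simp [stirlingDenom]
  exact (le_div_iff₀ (stirlingDenom_pos hk)).1 (sqrt_pi_le_stirlingSeq hk)

lemma factorial_le_exp_one_div_sqrt_two_mul_stirlingDenom {k : ℕ} (hk : k ≠ 0) :
    (k ! : ℝ) ≤ exp 1 / √2 * stirlingDenom k :=
  (div_le_iff₀ (stirlingDenom_pos hk)).1 (stirlingSeq_le_exp_one_div_sqrt_two hk)

theorem pow_cells_mul_pow_total_eq {M : Type*} [CommMonoid M] {L U V W N D S F C : M}
    (l u v w : ℕ) (hL : N * L = D * S) (hU : N * U = D * C) (hV : N * V = S * F)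
    (hW : N * W = C * F) :
    L ^ l * U ^ u * V ^ v * W ^ w * N ^ (l + u + v + w) =
      D ^ (l + u) * S ^ (l + v) * F ^ (v + w) * C ^ (u + w) := by
  calc L ^ l * U ^ u * V ^ v * W ^ w * N ^ (l + u + v + w)
      = (N * L) ^ l * (N * U) ^ u * (N * V) ^ v * (N * W) ^ w := by
        simp only [mul_pow, pow_add]; ac_rfl
    _ = D ^ (l + u) * S ^ (l + v) * F ^ (v + w) * C ^ (u + w) := by
        rw [hL, hU, hV, hW]; simp only [mul_pow, pow_add]; ac_rfl

theorem cast_choose_mul_choose_div_choose (l u v w : ℕ) :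
    ((l + u).choose l * (v + w).choose v / (l + u + v + w).choose (l + v) : ℝ) =
      (l + u)! * (l + v)! * (v + w)! * (u + w)! / (l ! * u ! * v ! * w ! * (l + u + v + w)!) := by
  rw [show l + u + v + w = (l + v) + (u + w) by ring, Nat.cast_add_choose, Nat.cast_add_choose,
    Nat.cast_add_choose]
  field_simp

theorem sqrt_margins_mul_sqrt_two_eq {l u v w : ℝ} (hl : 0 < l) (hu : 0 < u) (hv : 0 < v)
    (hw : 0 < w) (hlw : l * w = u * v) :
    √(2 * (l + u)) * √(2 * (l + v)) * √(2 * (v + w)) * √(2 * (u + w)) * √2 =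
      1 / √l * √((l + u) / u) * √((l + u + v + w) / (v + w)) *
        (√(2 * l) * √(2 * u) * √(2 * v) * √(2 * w) * √(2 * (l + u + v + w))) := by
  rw [← sq_eq_sq₀ (by positivity) (by positivity)]
  simp (disch := positivity) only [mul_pow, div_pow, one_pow, Real.sq_sqrt]
  field_simp
  linear_combination (w ^ 2 + u * w - v ^ 2 - l * v) * hlw

theorem stirlingDenom_margins_div_cells_eq {l u v w : ℕ} (hl : l ≠ 0) (hu : u ≠ 0) (hv : v ≠ 0)
    (hw : w ≠ 0) (hlw : l * w = u * v) :
    stirlingDenom (l + u) * stirlingDenom (l + v) * stirlingDenom (v + w) * stirlingDenom (u + w) /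
        (stirlingDenom l * stirlingDenom u * stirlingDenom v * stirlingDenom w *
          stirlingDenom (l + u + v + w)) =
      1 / √l * √((l + u) / u) * √((l + u + v + w) / (v + w)) / √2 := by
  have hlw' : (l * w : ℝ) = u * v := by exact_mod_cast hlw
  have hpow := pow_cells_mul_pow_total_eq (L := l / exp 1) (U := u / exp 1) (V := v / exp 1)
    (W := w / exp 1) (N := (l + u + v + w) / exp 1) (D := (l + u) / exp 1)
    (S := (l + v) / exp 1) (F := (v + w) / exp 1) (C := (u + w) / exp 1) l u v w
    (by field_simp; linear_combination hlw') (by field_simp; linear_combination -hlw')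
    (by field_simp; linear_combination -hlw') (by field_simp; linear_combination hlw')
  have hsqrt := sqrt_margins_mul_sqrt_two_eq (l := l) (u := u) (v := v) (w := w) (by positivity)
    (by positivity) (by positivity) (by positivity) hlw'
  have := stirlingDenom_pos hl; have := stirlingDenom_pos hu; have := stirlingDenom_pos hv
  have := stirlingDenom_pos hw; have := stirlingDenom_pos (show l + u + v + w ≠ 0 by omega)
  rw [div_eq_div_iff (by positivity) (by positivity)]
  simp only [stirlingDenom, Nat.cast_add]
  linear_combination congrArg₂ (· * ·) hsqrt hpow.symm

theorem four_pi_sq_div_exp_five_mul_le_choose_mul_choose_div_choose {l u v w : ℕ} (hl : l ≠ 0)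
    (hu : u ≠ 0) (hv : v ≠ 0) (hw : w ≠ 0) (hlw : l * w = u * v) :
    4 * π ^ 2 / exp 1 ^ 5 * (1 / √l) * √((l + u) / u) * √((l + u + v + w) / (v + w)) ≤
      ((l + u).choose l * (v + w).choose v / (l + u + v + w).choose (l + v) : ℝ) := by
  have h2 : √2 ^ 2 = 2 := Real.sq_sqrt zero_le_two
  have hπ : √π ^ 4 = π ^ 2 := by rw [show 4 = 2 * 2 by rfl, pow_mul, Real.sq_sqrt pi_pos.le]
  rw [cast_choose_mul_choose_div_choose]
  calc 4 * π ^ 2 / exp 1 ^ 5 * (1 / √l) * √((l + u) / u) * √((l + u + v + w) / (v + w))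
      = √π ^ 4 / (exp 1 / √2) ^ 5 *
          (1 / √l * √((l + u) / u) * √((l + u + v + w) / (v + w)) / √2) := by
        rw [← hπ]
        field_simp
        rw [show √2 ^ 4 = (√2 ^ 2) ^ 2 by ring, h2]
        ring
    _ = √π * stirlingDenom (l + u) * (√π * stirlingDenom (l + v)) * (√π * stirlingDenom (v + w)) *
          (√π * stirlingDenom (u + w)) /
        (exp 1 / √2 * stirlingDenom l * (exp 1 / √2 * stirlingDenom u) *
          (exp 1 / √2 * stirlingDenom v) * (exp 1 / √2 * stirlingDenom w) *
          (exp 1 / √2 * stirlingDenom (l + u + v + w))) := by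
        rw [← stirlingDenom_margins_div_cells_eq hl hu hv hw hlw]
        ring
    _ ≤ _ := by
        have := stirlingDenom_pos hl; have := stirlingDenom_pos hu; have := stirlingDenom_pos hv
        have := stirlingDenom_pos hw; have := stirlingDenom_pos (show l + u + v + w ≠ 0 by omega)
        gcongr
        all_goals first
          | exact mul_nonneg (sqrt_nonneg π) (stirlingDenom_nonneg _)
          | exact sqrt_pi_mul_stirlingDenom_le_factorial _
          | exact factorial_le_exp_one_div_sqrt_two_mul_stirlingDenom (by omega)

theorem exists_cells_of_mul_eq_mul {n d l s : ℕ} (hl : 0 < l) (hld : l < d) (hdn : d < n)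
    (hds : d * s = n * l) :
    ∃ u v w, u ≠ 0 ∧ v ≠ 0 ∧ w ≠ 0 ∧ l * w = u * v ∧ d = l + u ∧ s = l + v ∧
      n = l + u + v + w := by
  have hls : l < s := by nlinarith
  obtain ⟨u, rfl⟩ := Nat.exists_eq_add_of_lt hld
  obtain ⟨v, rfl⟩ := Nat.exists_eq_add_of_lt hls
  have hn : l + (u + 1) + (v + 1) < n := by nlinarith
  obtain ⟨w, rfl⟩ := Nat.exists_eq_add_of_lt hn
  refine ⟨u + 1, v + 1, w + 1, by omega, by omega, by omega, by nlinarith, rfl, rfl, rfl⟩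

theorem hypergeometric_mean_hitting_lower_bound_general (n d l : ℕ)
    (hl : 0 < l) (hld : l < d) (hdn : d < n) (hdvd : d ∣ n * l) :
    (d.choose l : ℝ) * ((n - d).choose (n * l / d - l) : ℝ) / (n.choose (n * l / d) : ℝ) ≥
      (4 * Real.pi ^ 2 / (Real.exp 1) ^ 5) * (1 / Real.sqrt l) *
        Real.sqrt ((d : ℝ) / ((d : ℝ) - l)) * Real.sqrt ((n : ℝ) / ((n : ℝ) - d)) := by
  obtain ⟨u, v, w, hu, hv, hw, hlw, rfl, hs, rfl⟩ :=
    exists_cells_of_mul_eq_mul hl hld hdn (Nat.mul_div_cancel' hdvd)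
  rw [hs, Nat.add_sub_cancel_left, show l + u + v + w - (l + u) = v + w by omega]
  push_cast
  rw [add_sub_cancel_left, show (l + u + v + w : ℝ) - (l + u) = v + w by ring]
  exact four_pi_sq_div_exp_five_mul_le_choose_mul_choose_div_choose hl.ne' hu hv hw hlw

theorem hypergeometric_mean_hitting_lower_bound (n d l : ℕ)
    (hl : 0 < l) (hld : l < d) (hdn : d < n) (hdvd : d ∣ n * l)
    (hs1 : l ≤ n * l / d) (hs2 : n * l / d ≤ n) :
    (d.choose l : ℝ) * ((n - d).choose (n * l / d - l) : ℝ) / (n.choose (n * l / d) : ℝ) ≥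
      (4 * Real.pi ^ 2 / (Real.exp 1) ^ 5) * (1 / Real.sqrt l) *
        Real.sqrt ((d : ℝ) / ((d : ℝ) - l)) * Real.sqrt ((n : ℝ) / ((n : ℝ) - d)) :=
  hypergeometric_mean_hitting_lower_bound_general n d l hl hld hdn hdvd
end

section
/- Ratio identity for shifted hypergeometric probabilities: let n, d, l, s, m be appropriate natural numbers with s = n·l/d and define p(D) = C(D, l)·C(N − D, s − l)/C(N, s) where N is the population size of the sub-population. Then for population sizes N = α₁n and defective counts α₁d and (1+δ)α₁d (all integers), the ratio p(α₁d)/p((1+δ)α₁d) equals ∏_{i=1}^{α₁dδ} (1 − l/(α₁d + i)) · ∏_{i=0}^{α₁dδ−1} (1 + (l/d)(n−d) / ((n−d)(α₁ − l/d) − i)). -/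
open Finset

lemma chooseA (a l : ℕ) (hla : l ≤ a) : ∀ m : ℕ,
    (a.choose l : ℝ) / ((a + m).choose l : ℝ)
      = ∏ i ∈ Icc 1 m, (((a : ℝ) + i - l) / ((a : ℝ) + i)) := by
  intro m
  induction m with
  | zero => simp [div_self, Nat.choose_pos hla, (Nat.choose_pos hla).ne']
  | succ m ih =>
      rw [Finset.prod_Icc_succ_top (by omega), ← ih]
      have key := Nat.choose_mul_succ_eq (a + m) l
      have h1 : (0:ℝ) < ((a + m).choose l : ℝ) := by
        exact_mod_cast Nat.choose_pos (by omega)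
      have h2 : (0:ℝ) < ((a + m + 1).choose l : ℝ) := by
        exact_mod_cast Nat.choose_pos (by omega)
      have hc : ((a + m).choose l : ℝ) * ((a:ℝ) + m + 1)
          = ((a + m + 1).choose l : ℝ) * ((a:ℝ) + (m + 1) - l) := by
        have hl : l ≤ a + m + 1 := by omega
        have key' : (((a+m).choose l * (a+m+1) : ℕ) : ℝ) = (((a+m+1).choose l * (a+m+1-l) : ℕ) : ℝ) := by exact_mod_cast key
        push_cast [Nat.cast_sub hl] at key'
        linarith
      show (a.choose l : ℝ) / ((a + (m+1)).choose l : ℝ) = _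
      have : (a + (m+1)) = (a + m + 1) := by omega
      rw [this]
      have hd : ((a:ℝ) + (m+1)) ≠ 0 := by positivity
      field_simp
      push_cast at hc ⊢
      nlinarith [hc]

lemma chooseB (b k : ℕ) : ∀ m : ℕ, k + m ≤ b →
    (b.choose k : ℝ) / ((b - m).choose k : ℝ)
      = ∏ i ∈ range m, (((b : ℝ) - i) / ((b : ℝ) - k - i)) := by
  intro m
  induction m with
  | zero => intro h; simp [div_self, (Nat.choose_pos (by omega : k ≤ b)).ne']
  | succ m ih =>
      intro h
      rw [Finset.prod_range_succ, ← ih (by omega)]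
      have hc := Nat.choose_mul_succ_eq (b - m - 1) k
      have e1 : b - m - 1 + 1 = b - m := by omega
      rw [e1] at hc
      have h1 : (0:ℝ) < ((b - m).choose k : ℝ) := by
        exact_mod_cast Nat.choose_pos (by omega : k ≤ b - m)
      have h2 : (0:ℝ) < ((b - (m+1)).choose k : ℝ) := by
        exact_mod_cast Nat.choose_pos (by omega : k ≤ b - (m+1))
      have e2 : b - m - 1 = b - (m + 1) := by omega
      rw [e2] at hc
      have hcr : ((b - (m+1)).choose k : ℝ) * ((b:ℝ) - m)
          = ((b - m).choose k : ℝ) * ((b:ℝ) - k - m) := by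
        have := hc
        have c1 : ((b - m : ℕ) : ℝ) = (b:ℝ) - m := by
          push_cast [Nat.cast_sub (by omega : m ≤ b)]; ring
        have c2 : ((b - m - k : ℕ) : ℝ) = (b:ℝ) - k - m := by
          push_cast [Nat.cast_sub (by omega : k ≤ b - m), Nat.cast_sub (by omega : m ≤ b)]; ring
        calc ((b - (m+1)).choose k : ℝ) * ((b:ℝ) - m)
            = ((b - (m+1)).choose k : ℝ) * ((b - m : ℕ) : ℝ) := by rw [c1]
          _ = ((b - m).choose k : ℝ) * ((b - m - k : ℕ) : ℝ) := by exact_mod_cast this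
          _ = _ := by rw [c2]
      have hd2 : ((b:ℝ) - k - m) ≠ 0 := by
        have : (k:ℝ) + m + 1 ≤ b := by exact_mod_cast h
        intro hz; nlinarith
      field_simp
      nlinarith [hcr]


/-- Ratio identity for shifted hypergeometric point probabilities:
`N = α₁·n` is the sub-population size, `a = α₁·d` and `a + m = (1+δ)·α₁·d` the
two defective counts (`m = δ·α₁·d`), and `s = n·l/d` the sample size. -/
theorem hypergeometric_shifted_ratio (n d l s N a m : ℕ) (α₁ δ : ℝ)
    (hα₁ : 0 < α₁) (hα₁' : α₁ < 1) (hδ : 0 < δ)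
    (hN : (N : ℝ) = α₁ * n) (ha : (a : ℝ) = α₁ * d) (hm : (m : ℝ) = δ * α₁ * d)
    (hm0 : 0 < m) (hs : s = n * l / d) (hdvd : d ∣ n * l)
    (hla : l ≤ a) (hsl : s - l ≤ N - (a + m)) (hsN : s ≤ N) (haN : a + m ≤ N)
    (hln : l < d) (hdn : d < n) :
    ((a.choose l : ℝ) * ((N - a).choose (s - l) : ℝ) / (N.choose s : ℝ)) /
      (((a + m).choose l : ℝ) * ((N - (a + m)).choose (s - l) : ℝ) / (N.choose s : ℝ)) =
    (∏ i ∈ Finset.Icc 1 m, (1 - (l : ℝ) / ((a : ℝ) + i))) *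
      (∏ i ∈ Finset.range m,
        (1 + ((l : ℝ) / d) * ((n : ℝ) - d) / (((n : ℝ) - d) * (α₁ - (l : ℝ) / d) - i))) := by
  have hd1 : 1 ≤ d := by omega
  have hsd : s * d = n * l := by rw [hs]; exact Nat.div_mul_cancel hdvd
  have hls : l ≤ s := by
    have : l * d ≤ s * d := by rw [hsd]; nlinarith
    exact Nat.le_of_mul_le_mul_right this (by omega)
  have hkm : (s - l) + m ≤ N - a := by omega
  have hNa : N - (a + m) = N - a - m := by omega
  have hCN : (0:ℝ) < (N.choose s : ℝ) := by exact_mod_cast Nat.choose_pos hsN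
  have hC1 : (0:ℝ) < ((a + m).choose l : ℝ) := by
    exact_mod_cast Nat.choose_pos (by omega : l ≤ a + m)
  have hC2 : (0:ℝ) < ((N - a - m).choose (s - l) : ℝ) := by
    exact_mod_cast Nat.choose_pos (by omega : s - l ≤ N - a - m)
  rw [hNa]
  have hA := chooseA a l hla m
  have hB := chooseB (N - a) (s - l) m hkm
  have lhs_eq : ((a.choose l : ℝ) * ((N - a).choose (s - l) : ℝ) / (N.choose s : ℝ)) /
      (((a + m).choose l : ℝ) * ((N - a - m).choose (s - l) : ℝ) / (N.choose s : ℝ))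
      = ((a.choose l : ℝ) / ((a + m).choose l : ℝ)) *
        (((N - a).choose (s - l) : ℝ) / ((N - a - m).choose (s - l) : ℝ)) := by
    field_simp
  rw [lhs_eq, hA, hB]
  have hdR : (0:ℝ) < d := by exact_mod_cast hd1
  have hsR : (s:ℝ) = n * l / d := by
    have : (s:ℝ) * d = n * l := by exact_mod_cast hsd
    field_simp at this ⊢
    linarith
  have hbR : ((N - a : ℕ) : ℝ) = (N:ℝ) - a := by
    push_cast [Nat.cast_sub (by omega : a ≤ N)]; ring
  have hkR : ((s - l : ℕ) : ℝ) = (s:ℝ) - l := by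
    push_cast [Nat.cast_sub hls]; ring
  congr 1
  · apply Finset.prod_congr rfl
    intro i hi
    simp only [Finset.mem_Icc] at hi
    have hne : (a:ℝ) + i ≠ 0 := by
      have : (1:ℝ) ≤ i := by exact_mod_cast hi.1
      positivity
    field_simp
  · apply Finset.prod_congr rfl
    intro i hi
    simp only [Finset.mem_range] at hi
    have key1 : ((n:ℝ) - d) * (α₁ - (l:ℝ)/d) = ((N - a : ℕ):ℝ) - ((s - l : ℕ):ℝ) := by
      rw [hbR, hkR, hN, ha, hsR]
      field_simp
    have key2 : ((l:ℝ)/d) * ((n:ℝ) - d) = ((s - l : ℕ):ℝ) := by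
      rw [hkR, hsR]
      field_simp
    have hden : ((N - a : ℕ):ℝ) - ((s - l : ℕ):ℝ) - i ≠ 0 := by
      have h1 : ((s - l : ℕ):ℝ) + m ≤ ((N - a : ℕ):ℝ) := by exact_mod_cast hkm
      have h2 : (i:ℝ) + 1 ≤ (m:ℝ) := by exact_mod_cast hi
      intro hz; linarith
    rw [key1, key2]
    have e : ((N - a : ℕ):ℝ) - (i:ℝ) = (((N - a : ℕ):ℝ) - ((s - l : ℕ):ℝ) - (i:ℝ)) + ((s - l : ℕ):ℝ) := by ring
    rw [e, add_div, div_self hden]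
end
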